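/- arXiv:1706.07148 — 8 statements merged into one kernel-verified Lean document; each statement's English description precedes it below -/
import Mathlib

section
/- For m ≥ 2 and n a positive integer with base m representation n = α_j·m^j + α_{j-1}·m^{j-1} + ... + α_1·m + α_0 (where α_j > 0 and 0 ≤ α_i ≤ m-1 for all i), the number b_m(n) of m-ary partitions of n (partitions where each part is a power of m) equals the j-fold nested sum: b_m(n) = Σ_{k_j=0}^{α_j} Σ_{k_{j-1}=0}^{α_{j-1}+m·k_j} ... Σ_{k_1=0}^{α_1+m·k_2} 1. In particular b_m(n) = 1 when j = 0. -/
noncomputable def bm (m n : ℕ) : ℕ :=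
  Nat.card {f : ℕ →₀ ℕ // ∑ i ∈ f.support, f i * m ^ i = n}

def nestedSum (m : ℕ) : List ℕ → ℕ
  | [] => 1
  | [a] => a + 1
  | a :: b :: rest => ∑ k ∈ Finset.range (a + 1), nestedSum m ((b + m * k) :: rest)
  termination_by l => l.length
  decreasing_by simp

/-!
Let `p_t(n)` count the `m`-ary partitions of `n` whose parts are all smaller than `m ^ t`.
Sorting by the multiplicity `c` of the part `m ^ t` gives
`p_{t+1}(n) = ∑_{c ≤ n / m ^ t} p_t(n - c m ^ t)`. For `n = q m ^ t + r` with `r < m ^ t`,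
put `k = q - c`: the summand is `p_t(k m ^ t + r)`, and moving `k m ^ t` into the next digit turns
`α_{t-1}` into `α_{t-1} + m k`, which is exactly the recursion of the nested sum. Finally
`b_m(n) = p_{j+1}(n)` because `n < m ^ (j + 1)`.
-/

open Finset Finsupp

theorem Set.Finite.ncard_eq_sum_ncard_fiber {α : Type*} {s : Set α} (hs : s.Finite) (π : α → ℕ)
    {N : ℕ} (hπ : ∀ a ∈ s, π a ≤ N) :
    s.ncard = ∑ c ∈ Finset.range (N + 1), {a ∈ s | π a = c}.ncard := by
  classical
  rw [Set.ncard_eq_toFinset_card s hs,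
    card_eq_sum_card_fiberwise fun a ha => mem_range_succ_iff.2 (hπ a (by simpa using ha))]
  refine sum_congr rfl fun c _ => ?_
  rw [← Set.ncard_coe_finset, coe_filter]
  simp_rw [hs.mem_toFinset]

theorem Finsupp.weight_erase_add {σ : Type*} (w : σ → ℕ) (f : σ →₀ ℕ) (i : σ) :
    weight w (erase i f) + f i * w i = weight w f := by
  conv_rhs => rw [← erase_add_single i f]
  rw [map_add, weight_single, smul_eq_mul]

theorem sum_mul_pow_lt_pow {m : ℕ} {β : ℕ → ℕ} :
    ∀ {t : ℕ}, (∀ i < t, β i < m) → ∑ i ∈ range t, β i * m ^ i < m ^ t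
  | 0, _ => by simp
  | t + 1, hβ => by
    have hlow := sum_mul_pow_lt_pow fun i hi => hβ i (Nat.lt_succ_of_lt hi)
    calc ∑ i ∈ range (t + 1), β i * m ^ i < m ^ t + β t * m ^ t := by
          rw [sum_range_succ]; omega
      _ = (β t + 1) * m ^ t := by ring
      _ ≤ m * m ^ t := Nat.mul_le_mul_right _ (hβ t t.lt_succ_self)
      _ = m ^ (t + 1) := (pow_succ' m t).symm

theorem List.map_range_succ_sub (f : ℕ → ℕ) (t : ℕ) :
    (List.range (t + 1)).map (fun i => f (t + 1 - i)) =
      f (t + 1) :: (List.range t).map fun i => f (t - i) := by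
  simp [List.range_succ_eq_map, Function.comp_def]

theorem bm_eq_ncard (m n : ℕ) : bm m n = {f : ℕ →₀ ℕ | weight (m ^ ·) f = n}.ncard := rfl

def maryPartitionsBelow (m t n : ℕ) : Set (ℕ →₀ ℕ) :=
  {f | f.support ⊆ range t ∧ weight (m ^ ·) f = n}

variable {m : ℕ}

theorem support_subset_range_of_weight_lt (hm : 0 < m) {t : ℕ} {f : ℕ →₀ ℕ}
    (hf : weight (m ^ ·) f < m ^ t) : f.support ⊆ range t := by
  intro i hi
  have : m ^ i < m ^ t := (le_weight_of_ne_zero' (m ^ ·) (mem_support_iff.1 hi)).trans_lt hf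
  exact mem_range.2 (by_contra fun hti => this.not_ge (Nat.pow_le_pow_right hm (not_lt.1 hti)))

theorem maryPartitionsBelow_eq_of_lt (hm : 0 < m) {t n : ℕ} (hn : n < m ^ t) :
    maryPartitionsBelow m t n = {f | weight (m ^ ·) f = n} := by
  ext f
  exact ⟨And.right, fun hf => ⟨support_subset_range_of_weight_lt hm (hf ▸ hn), hf⟩⟩

theorem maryPartitionsBelow_one (n : ℕ) : maryPartitionsBelow m 1 n = {single 0 n} := by
  ext f
  simp only [maryPartitionsBelow, range_one, support_subset_singleton, Set.mem_ofPred_eq,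
    Set.mem_singleton_iff]
  constructor
  · rintro ⟨hf, rfl⟩
    rw [hf, weight_single]
    simp
  · rintro rfl
    simp [weight_single]

theorem finite_maryPartitionsBelow (hm : 0 < m) (t n : ℕ) :
    (maryPartitionsBelow m t n).Finite := by
  refine (Set.finite_Iic (indicator (range t) fun _ _ => n)).subset fun f ⟨hsupp, hw⟩ i => ?_
  rw [indicator_apply]
  split_ifs with hi
  · exact hw ▸ le_weight (m ^ ·) (pow_pos hm i).ne' f
  · exact (notMem_support_iff.1 fun h => hi (hsupp h)).le

theorem maryPartitionsBelow_succ_fiber {t n c : ℕ} (hc : c * m ^ t ≤ n) :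
    {f ∈ maryPartitionsBelow m (t + 1) n | f t = c} =
      (· + single t c) '' maryPartitionsBelow m t (n - c * m ^ t) := by
  ext f
  constructor
  · rintro ⟨⟨hsupp, hw⟩, rfl⟩
    refine ⟨f.erase t, ⟨fun i hi => ?_, ?_⟩, erase_add_single t f⟩
    · rw [support_erase, Finset.mem_erase] at hi
      exact mem_range.2 (lt_of_le_of_ne (mem_range_succ_iff.1 (hsupp hi.2)) hi.1)
    · have := weight_erase_add (m ^ ·) f t
      omega
  · rintro ⟨g, ⟨hsupp, hw⟩, rfl⟩
    have hgt : g t = 0 := notMem_support_iff.1 fun h => by simpa using hsupp h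
    refine ⟨⟨(support_add).trans (union_subset ?_ ?_), ?_⟩, by simp [hgt]⟩
    · exact hsupp.trans (range_subset_range.2 t.le_succ)
    · exact support_single_subset.trans (by simp)
    · rw [map_add, weight_single, hw, smul_eq_mul]
      omega

theorem ncard_maryPartitionsBelow_succ (hm : 0 < m) (t n : ℕ) :
    (maryPartitionsBelow m (t + 1) n).ncard =
      ∑ c ∈ range (n / m ^ t + 1), (maryPartitionsBelow m t (n - c * m ^ t)).ncard := by
  have hpow : 0 < m ^ t := pow_pos hm t
  have hbound : ∀ f ∈ maryPartitionsBelow m (t + 1) n, f t ≤ n / m ^ t := fun f hf =>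
    (Nat.le_div_iff_mul_le hpow).2 (hf.2 ▸ weight_erase_add (m ^ ·) f t ▸ le_add_self)
  rw [(finite_maryPartitionsBelow hm (t + 1) n).ncard_eq_sum_ncard_fiber (· t) hbound]
  refine sum_congr rfl fun c hc => ?_
  rw [maryPartitionsBelow_succ_fiber ((Nat.le_div_iff_mul_le hpow).1 (mem_range_succ_iff.1 hc)),
    Set.ncard_image_of_injective _ (add_left_injective _)]

theorem ncard_maryPartitionsBelow_succ_mul_add (hm : 0 < m) {t r : ℕ} (hr : r < m ^ t) (q : ℕ) :
    (maryPartitionsBelow m (t + 1) (q * m ^ t + r)).ncard =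
      ∑ k ∈ range (q + 1), (maryPartitionsBelow m t (k * m ^ t + r)).ncard := by
  have hdiv : (q * m ^ t + r) / m ^ t = q := by
    rw [add_comm, Nat.add_mul_div_right _ _ (pow_pos hm t), Nat.div_eq_of_lt hr, zero_add]
  rw [ncard_maryPartitionsBelow_succ hm, hdiv, ← sum_range_reflect]
  refine sum_congr rfl fun k hk => ?_
  obtain ⟨d, rfl⟩ := Nat.exists_eq_add_of_le (mem_range_succ_iff.1 hk)
  congr 2
  rw [Nat.add_sub_cancel, Nat.add_sub_cancel_left, add_mul]
  omega

theorem ncard_maryPartitionsBelow_eq_nestedSum (hm : 0 < m) (β : ℕ → ℕ) :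
    ∀ (t q : ℕ), (∀ i ≤ t, β i < m) →
      (maryPartitionsBelow m (t + 2) (q * m ^ (t + 1) + ∑ i ∈ range (t + 1), β i * m ^ i)).ncard =
        nestedSum m (q :: (List.range t).map fun i => β (t - i))
  | 0, q, hβ => by
    have h := ncard_maryPartitionsBelow_succ_mul_add hm (t := 1) (r := β 0)
      (by simpa using hβ 0 le_rfl) q
    simpa [maryPartitionsBelow_one, nestedSum] using h
  | t + 1, q, hβ => by
    have hlow := sum_mul_pow_lt_pow fun i (hi : i < t + 2) => hβ i (Nat.lt_succ_iff.1 hi)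
    rw [ncard_maryPartitionsBelow_succ_mul_add hm hlow, List.map_range_succ_sub, nestedSum]
    refine sum_congr rfl fun k _ => ?_
    rw [← ncard_maryPartitionsBelow_eq_nestedSum hm β t _ fun i hi => hβ i (hi.trans t.le_succ),
      sum_range_succ _ (t + 1)]
    congr 2
    ring

theorem mary_enumeration_general (m n j : ℕ) (α : ℕ → ℕ) (hd : ∀ i, i ≤ j → α i < m)
    (hn : n = ∑ i ∈ Finset.range (j + 1), α i * m ^ i) :
    bm m n = nestedSum m ((List.range j).map fun i => α (j - i)) ∧
    (j = 0 → bm m n = 1) := by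
  have hm : 0 < m := Nat.zero_lt_of_lt (hd 0 j.zero_le)
  have hlt : n < m ^ (j + 1) := hn ▸ sum_mul_pow_lt_pow fun i hi => hd i (Nat.lt_succ_iff.1 hi)
  have key : bm m n = nestedSum m ((List.range j).map fun i => α (j - i)) := by
    rw [bm_eq_ncard, ← maryPartitionsBelow_eq_of_lt hm hlt]
    cases j with
    | zero => simp [maryPartitionsBelow_one, nestedSum]
    | succ t =>
      rw [hn, sum_range_succ, add_comm (∑ _ ∈ _, _), List.map_range_succ_sub]
      exact ncard_maryPartitionsBelow_eq_nestedSum hm α t _ fun i hi => hd i (hi.trans t.le_succ)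
  exact ⟨key, fun hj => by simpa [hj, nestedSum] using key⟩

theorem mary_enumeration (m n j : ℕ) (α : ℕ → ℕ) (hm : 2 ≤ m) (hj : 0 < α j) (hd : ∀ i, i ≤ j → α i < m)
    (hn : n = ∑ i ∈ Finset.range (j + 1), α i * m ^ i) :
    bm m n = nestedSum m ((List.range j).map fun i => α (j - i)) ∧
    (j = 0 → bm m n = 1) :=
  mary_enumeration_general m n j α hd hn
end

section
/- For m ≥ 2 and n with base m representation (α_j, ..., α_0), the set B_m(n) of m-ary partitions of n is in bijection with the set S_m(n) of integer sequences (β_j, β_{j-1}, ..., β_1) satisfying 0 ≤ β_j ≤ α_j and 0 ≤ β_t ≤ α_t + m·β_{t+1} for 1 ≤ t ≤ j-1. In particular, b_m(n) = |S_m(n)|. -/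
namespace MaryAux

def A (m j : ℕ) (α : ℕ → ℕ) (t : ℕ) : ℕ := ∑ i ∈ Finset.Ico t (j + 1), α i * m ^ (i - t)

lemma A_top (m j : ℕ) (α : ℕ → ℕ) : A m j α (j + 1) = 0 := by simp [A]

lemma A_rec (m j : ℕ) (α : ℕ → ℕ) {t : ℕ} (ht : t ≤ j) :
    A m j α t = α t + m * A m j α (t + 1) := by
  rw [A, A, Finset.sum_eq_sum_Ico_succ_bot (by omega : t < j + 1)]
  simp only [Nat.sub_self, pow_zero, mul_one]
  congr 1
  rw [Finset.mul_sum]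
  refine Finset.sum_congr rfl fun i hi => ?_
  rw [Finset.mem_Ico] at hi
  have h : i - t = (i - (t + 1)) + 1 := by omega
  rw [h, pow_succ]
  ring

lemma A_spec (m j : ℕ) (α : ℕ → ℕ) {t : ℕ} (ht : t ≤ j + 1) :
    m ^ t * A m j α t + ∑ i ∈ Finset.range t, α i * m ^ i
      = ∑ i ∈ Finset.range (j + 1), α i * m ^ i := by
  have h1 : m ^ t * A m j α t = ∑ i ∈ Finset.Ico t (j + 1), α i * m ^ i := by
    rw [A, Finset.mul_sum]
    refine Finset.sum_congr rfl fun i hi => ?_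
    rw [Finset.mem_Ico] at hi
    rw [← mul_assoc, mul_comm (m ^ t), mul_assoc, ← pow_add]
    congr 2
    omega
  rw [h1, add_comm, Finset.sum_range_add_sum_Ico _ ht]

def S (m : ℕ) (f : ℕ →₀ ℕ) (t : ℕ) : ℕ :=
  ∑ i ∈ f.support, if t ≤ i then f i * m ^ (i - t) else 0

lemma S_rec (m : ℕ) (f : ℕ →₀ ℕ) (t : ℕ) : S m f t = f t + m * S m f (t + 1) := by
  rw [S, S, Finset.mul_sum]
  have h : ∀ i ∈ f.support,
      (if t ≤ i then f i * m ^ (i - t) else 0)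
        = (if i = t then f i else 0) + m * (if t + 1 ≤ i then f i * m ^ (i - (t + 1)) else 0) := by
    intro i _
    rcases lt_trichotomy i t with h | h | h
    · rw [if_neg (by omega), if_neg (by omega), if_neg (by omega)]; simp
    · subst h
      rw [if_pos le_rfl, if_pos rfl, if_neg (by omega)]
      simp
    · rw [if_pos (by omega), if_neg (by omega), if_pos (by omega)]
      have h2 : i - t = (i - (t + 1)) + 1 := by omega
      rw [h2, pow_succ]; ring
  rw [Finset.sum_congr rfl h, Finset.sum_add_distrib, Finset.sum_ite_eq' f.support t]
  congr 1
  split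
  · rfl
  · next hts => rw [Finsupp.notMem_support_iff.mp hts]

lemma S_spec (m : ℕ) (f : ℕ →₀ ℕ) (t : ℕ) :
    m ^ t * S m f t + ∑ i ∈ Finset.range t, f i * m ^ i
      = ∑ i ∈ f.support, f i * m ^ i := by
  have h1 : m ^ t * S m f t = ∑ i ∈ f.support, if t ≤ i then f i * m ^ i else 0 := by
    rw [S, Finset.mul_sum]
    refine Finset.sum_congr rfl fun i _ => ?_
    split
    · next h =>
      rw [← mul_assoc, mul_comm (m ^ t), mul_assoc, ← pow_add]
      congr 2; omega
    · simp
  have h2 : (∑ i ∈ f.support, if t ≤ i then 0 else f i * m ^ i)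
      = ∑ i ∈ Finset.range t, f i * m ^ i := by
    have he : (∑ i ∈ f.support, if t ≤ i then 0 else f i * m ^ i)
        = ∑ i ∈ f.support.filter (fun i => ¬ t ≤ i), f i * m ^ i := by
      rw [Finset.sum_filter]
      refine Finset.sum_congr rfl fun i _ => ?_
      by_cases h : t ≤ i <;> simp [h]
    rw [he]
    refine Finset.sum_subset ?_ ?_
    · intro i hi
      rw [Finset.mem_filter] at hi
      rw [Finset.mem_range]; omega
    · intro i hi hni
      rw [Finset.mem_range] at hi
      rw [Finset.mem_filter, not_and] at hni
      by_cases hs : i ∈ f.support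
      · exact absurd (by omega : ¬ t ≤ i) (by simpa using hni hs)
      · rw [Finsupp.notMem_support_iff.mp hs, zero_mul]
  have h3 : ∑ i ∈ f.support, f i * m ^ i
      = (∑ i ∈ f.support, if t ≤ i then f i * m ^ i else 0)
        + ∑ i ∈ f.support, if t ≤ i then 0 else f i * m ^ i := by
    rw [← Finset.sum_add_distrib]
    refine Finset.sum_congr rfl fun i _ => ?_
    split <;> simp
  rw [h1, h2.symm, ← h3]

end MaryAux

theorem mary_bijection (m n j : ℕ) (α : ℕ → ℕ) (hm : 2 ≤ m) (hj : 0 < α j) (hd : ∀ i, i ≤ j → α i < m)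
    (hn : n = ∑ i ∈ Finset.range (j + 1), α i * m ^ i) :
    Nonempty ({f : ℕ →₀ ℕ // ∑ i ∈ f.support, f i * m ^ i = n} ≃
      {β : ℕ → ℕ // β j ≤ α j ∧ (∀ t, 1 ≤ t → t < j → β t ≤ α t + m * β (t + 1)) ∧
        (∀ t, t = 0 ∨ j < t → β t = 0)}) ∧
    bm m n = Nat.card {β : ℕ → ℕ // β j ≤ α j ∧
      (∀ t, 1 ≤ t → t < j → β t ≤ α t + m * β (t + 1)) ∧
      (∀ t, t = 0 ∨ j < t → β t = 0)} := by
  classical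
  have hm0 : 0 < m := by omega
  -- the partial sums of the digits are small
  have hα_lt : ∀ t, t ≤ j + 1 → ∑ i ∈ Finset.range t, α i * m ^ i < m ^ t := by
    intro t ht
    induction t with
    | zero => simp
    | succ t ih =>
      rw [Finset.sum_range_succ]
      have h1 := ih (by omega)
      have h2 : α t ≤ m - 1 := by have := hd t (by omega); omega
      have h3 : α t * m ^ t ≤ (m - 1) * m ^ t := Nat.mul_le_mul_right _ h2
      have h4 : (m - 1) * m ^ t + m ^ t = m * m ^ t := by
        rw [Nat.sub_mul, one_mul, Nat.sub_add_cancel (Nat.le_mul_of_pos_left _ hm0)]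
      have h5 : m ^ (t + 1) = m * m ^ t := by rw [pow_succ, mul_comm]
      omega
  have hnlt : n < m ^ (j + 1) := hn ▸ hα_lt (j + 1) le_rfl
  have hA0 : MaryAux.A m j α 0 = n := by
    have := MaryAux.A_spec m j α (t := 0) (by omega)
    simpa using this.trans hn.symm
  have hAj : MaryAux.A m j α j = α j := by
    rw [MaryAux.A_rec m j α le_rfl, MaryAux.A_top]; simp
  -- any partition of n has no parts beyond m^j
  have key_lt : ∀ f : ℕ →₀ ℕ, (∑ i ∈ f.support, f i * m ^ i = n) → ∀ i, j < i → f i = 0 := by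
    intro f hf i hi
    by_contra h
    have hmem : i ∈ f.support := Finsupp.mem_support_iff.mpr h
    have hle : f i * m ^ i ≤ n := hf ▸ Finset.single_le_sum (f := fun i => f i * m ^ i)
      (fun i _ => Nat.zero_le _) hmem
    have h1 : m ^ i ≤ f i * m ^ i := Nat.le_mul_of_pos_left _ (Nat.pos_of_ne_zero h)
    have h2 : m ^ (j + 1) ≤ m ^ i := Nat.pow_le_pow_right hm0 (by omega)
    omega
  -- S f t = 0 past j
  have hStop : ∀ f : ℕ →₀ ℕ, (∀ i, j < i → f i = 0) → MaryAux.S m f (j + 1) = 0 := by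
    intro f hf
    rw [MaryAux.S]
    refine Finset.sum_eq_zero fun i _ => ?_
    split
    · next h => rw [hf i (by omega), zero_mul]
    · rfl
  -- key inequality  S f t ≤ A t
  have hsA : ∀ f : ℕ →₀ ℕ, (∑ i ∈ f.support, f i * m ^ i = n) →
      ∀ t, t ≤ j + 1 → MaryAux.S m f t ≤ MaryAux.A m j α t := by
    intro f hf t ht
    have h1 := MaryAux.S_spec m f t
    rw [hf] at h1
    have h2 := MaryAux.A_spec m j α ht
    rw [← hn] at h2
    have h3 := hα_lt t ht
    have h4 : m ^ t * MaryAux.S m f t < m ^ t * (MaryAux.A m j α t + 1) := by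
      rw [Nat.mul_add, mul_one]
      omega
    have := Nat.lt_of_mul_lt_mul_left h4
    omega
  -- forward map
  set F : {f : ℕ →₀ ℕ // ∑ i ∈ f.support, f i * m ^ i = n} → (ℕ → ℕ) :=
    fun f t => if 1 ≤ t ∧ t ≤ j then MaryAux.A m j α t - MaryAux.S m (f : ℕ →₀ ℕ) t else 0
    with hF
  -- backward map
  set G : {β : ℕ → ℕ // β j ≤ α j ∧ (∀ t, 1 ≤ t → t < j → β t ≤ α t + m * β (t + 1)) ∧
      (∀ t, t = 0 ∨ j < t → β t = 0)} → (ℕ →₀ ℕ) :=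
    fun β => Finsupp.onFinset (Finset.range (j + 1))
      (fun t => (if t ≤ j then α t else 0) + m * β.1 (t + 1) - β.1 t)
      (by
        intro a ha
        rw [Finset.mem_range]
        by_contra h
        have h1 : β.1 a = 0 := β.2.2.2 a (Or.inr (by omega))
        have h2 : β.1 (a + 1) = 0 := β.2.2.2 (a + 1) (Or.inr (by omega))
        have h3 : (if a ≤ j then α a else 0) + m * β.1 (a + 1) - β.1 a ≠ 0 := ha
        rw [if_neg (by omega), h1, h2] at h3
        simp at h3)
    with hG
  -- exactness of β-bounds:  β t ≤ α t + m β(t+1) for all t ≤ j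
  have hβle : ∀ β : {β : ℕ → ℕ // β j ≤ α j ∧ (∀ t, 1 ≤ t → t < j → β t ≤ α t + m * β (t + 1)) ∧
      (∀ t, t = 0 ∨ j < t → β t = 0)}, ∀ t, t ≤ j → β.1 t ≤ α t + m * β.1 (t + 1) := by
    intro β t ht
    rcases Nat.eq_or_lt_of_le ht with h | h
    · subst h
      have : β.1 (t + 1) = 0 := β.2.2.2 _ (Or.inr (by omega))
      rw [this, Nat.mul_zero, Nat.add_zero]
      exact β.2.1
    · rcases Nat.eq_zero_or_pos t with h0 | h0
      · rw [β.2.2.2 t (Or.inl h0)]; exact Nat.zero_le _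
      · exact β.2.2.1 t h0 h
  -- value of G β
  have hGval : ∀ β, ∀ t, (G β) t = (if t ≤ j then α t else 0) + m * β.1 (t + 1) - β.1 t := by
    intro β t; rfl
  -- G β sums to n
  have hGsum : ∀ β, ∑ i ∈ (G β).support, (G β) i * m ^ i = n := by
    intro β
    have hsub : (G β).support ⊆ Finset.range (j + 1) := Finsupp.support_onFinset_subset
    rw [Finset.sum_subset hsub (fun i _ hi => by
      rw [Finsupp.notMem_support_iff.mp hi, zero_mul])]
    have hkey : ∀ t ∈ Finset.range (j + 1),
        ((G β) t + β.1 t) * m ^ t = (α t + m * β.1 (t + 1)) * m ^ t := by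
      intro t ht
      rw [Finset.mem_range] at ht
      have h1 := hβle β t (by omega)
      have h2 := hGval β t
      rw [if_pos (by omega : t ≤ j)] at h2
      congr 1
      omega
    have hsum1 : ∑ t ∈ Finset.range (j + 1), ((G β) t + β.1 t) * m ^ t
        = ∑ t ∈ Finset.range (j + 1), (α t + m * β.1 (t + 1)) * m ^ t :=
      Finset.sum_congr rfl hkey
    simp only [Nat.add_mul] at hsum1
    rw [Finset.sum_add_distrib, Finset.sum_add_distrib] at hsum1
    have hshift : ∑ t ∈ Finset.range (j + 1), m * β.1 (t + 1) * m ^ t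
        = ∑ t ∈ Finset.range (j + 1), β.1 t * m ^ t := by
      have e1 : ∀ t, m * β.1 (t + 1) * m ^ t = β.1 (t + 1) * m ^ (t + 1) := by
        intro t; rw [pow_succ]; ring
      simp only [e1]
      have e2 := Finset.sum_range_succ' (fun t => β.1 t * m ^ t) (j + 1)
      have e3 := Finset.sum_range_succ (fun t => β.1 t * m ^ t) (j + 1)
      have hb0 : β.1 0 = 0 := β.2.2.2 0 (Or.inl rfl)
      have hbj : β.1 (j + 1) = 0 := β.2.2.2 _ (Or.inr (by omega))
      rw [e3, hbj, zero_mul, add_zero] at e2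
      rw [hb0, zero_mul, add_zero] at e2
      exact e2.symm
    rw [hshift, ← hn] at hsum1
    omega
  -- downward induction:  S (G β) t + β t = A t   for 1 ≤ t ≤ j + 1
  have hdown : ∀ β, ∀ k t, t + k = j + 1 → 1 ≤ t →
      MaryAux.S m (G β) t + β.1 t = MaryAux.A m j α t := by
    intro β k
    induction k with
    | zero =>
      intro t ht h1
      have ht' : t = j + 1 := by omega
      subst ht'
      have hz : ∀ i, j < i → (G β) i = 0 := by
        intro i hi
        have h1 : β.1 i = 0 := β.2.2.2 i (Or.inr hi)
        have h2 : β.1 (i + 1) = 0 := β.2.2.2 (i + 1) (Or.inr (by omega))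
        rw [hGval, if_neg (by omega), h1, h2]
        simp
      rw [hStop _ hz, β.2.2.2 _ (Or.inr (by omega)), MaryAux.A_top]
    | succ k ih =>
      intro t ht h1
      have htj : t ≤ j := by omega
      have hih := ih (t + 1) (by omega) (by omega)
      have hrec := MaryAux.S_rec m (G β) t
      have hval := hGval β t
      rw [if_pos htj] at hval
      have hle := hβle β t htj
      rw [MaryAux.A_rec m j α htj]
      have hmul : m * (MaryAux.S m (G β) (t + 1) + β.1 (t + 1))
          = m * MaryAux.A m j α (t + 1) := by rw [hih]
      rw [Nat.mul_add] at hmul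
      omega
  have hFval : ∀ (f : {f : ℕ →₀ ℕ // ∑ i ∈ f.support, f i * m ^ i = n}) (t : ℕ),
      F f t = if 1 ≤ t ∧ t ≤ j then MaryAux.A m j α t - MaryAux.S m (f : ℕ →₀ ℕ) t else 0 :=
    fun _ _ => rfl
  -- F lands in the target set
  have hFmem : ∀ f : {f : ℕ →₀ ℕ // ∑ i ∈ f.support, f i * m ^ i = n},
      F f j ≤ α j ∧ (∀ t, 1 ≤ t → t < j → F f t ≤ α t + m * F f (t + 1)) ∧
        (∀ t, t = 0 ∨ j < t → F f t = 0) := by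
    intro f
    refine ⟨?_, ?_, ?_⟩
    · rcases Nat.eq_zero_or_pos j with h0 | h0
      · rw [hFval, if_neg (by omega)]
        exact Nat.zero_le _
      · rw [hFval, if_pos ⟨h0, le_refl j⟩]
        calc MaryAux.A m j α j - MaryAux.S m (f : ℕ →₀ ℕ) j
            ≤ MaryAux.A m j α j := Nat.sub_le _ _
          _ = α j := hAj
    · intro t h1 h2
      rw [hFval, hFval, if_pos (⟨h1, by omega⟩ : 1 ≤ t ∧ t ≤ j),
        if_pos (⟨by omega, by omega⟩ : 1 ≤ t + 1 ∧ t + 1 ≤ j)]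
      have hrec := MaryAux.S_rec m (f : ℕ →₀ ℕ) t
      have hs1 := hsA f f.2 (t + 1) (by omega)
      have hArec := MaryAux.A_rec m j α (by omega : t ≤ j)
      have hmul : m * (MaryAux.A m j α (t + 1) - MaryAux.S m (f : ℕ →₀ ℕ) (t + 1))
          + m * MaryAux.S m (f : ℕ →₀ ℕ) (t + 1) = m * MaryAux.A m j α (t + 1) := by
        rw [← Nat.mul_add, Nat.sub_add_cancel hs1]
      omega
    · intro t ht
      rw [hFval, if_neg (by omega)]
  -- G ∘ F = id
  have hGF : ∀ f : {f : ℕ →₀ ℕ // ∑ i ∈ f.support, f i * m ^ i = n},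
      G ⟨F f, hFmem f⟩ = (f : ℕ →₀ ℕ) := by
    intro f
    apply Finsupp.ext
    intro t
    have hfz := key_lt (f : ℕ →₀ ℕ) f.2
    have hSj1 : MaryAux.S m (f : ℕ →₀ ℕ) (j + 1) = 0 := hStop _ hfz
    rw [hGval]
    simp only
    rcases Nat.lt_or_ge j t with hgt | hle
    · -- t > j
      rw [if_neg (by omega), hFval, hFval, if_neg (by omega), if_neg (by omega)]
      simp [hfz t hgt]
    · -- t ≤ j
      have hb1 : F f (t + 1) = MaryAux.A m j α (t + 1) - MaryAux.S m (f : ℕ →₀ ℕ) (t + 1) := by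
        rcases Nat.eq_or_lt_of_le hle with h | h
        · rw [hFval, if_neg (by omega), ← h, MaryAux.A_top, h, hSj1]
        · rw [hFval, if_pos ⟨by omega, by omega⟩]
      have hs1 := hsA f f.2 (t + 1) (by omega)
      have hmul : m * (MaryAux.A m j α (t + 1) - MaryAux.S m (f : ℕ →₀ ℕ) (t + 1))
          + m * MaryAux.S m (f : ℕ →₀ ℕ) (t + 1) = m * MaryAux.A m j α (t + 1) := by
        rw [← Nat.mul_add, Nat.sub_add_cancel hs1]
      have hArec := MaryAux.A_rec m j α hle
      have hrec := MaryAux.S_rec m (f : ℕ →₀ ℕ) t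
      rw [if_pos hle, hb1]
      rcases Nat.eq_zero_or_pos t with h0 | h0
      · subst h0
        rw [hFval, if_neg (by omega)]
        have hS0 : MaryAux.S m (f : ℕ →₀ ℕ) 0 = n := by
          have := MaryAux.S_spec m (f : ℕ →₀ ℕ) 0
          rw [f.2] at this
          simpa using this
        omega
      · rw [hFval, if_pos ⟨h0, hle⟩]
        have hst := hsA f f.2 t (by omega)
        omega
  -- F ∘ G = id
  have hFG : ∀ β : {β : ℕ → ℕ // β j ≤ α j ∧ (∀ t, 1 ≤ t → t < j → β t ≤ α t + m * β (t + 1)) ∧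
      (∀ t, t = 0 ∨ j < t → β t = 0)}, F ⟨G β, hGsum β⟩ = β.1 := by
    intro β
    funext t
    rw [hFval]
    by_cases h : 1 ≤ t ∧ t ≤ j
    · simp only [if_pos h]
      have := hdown β (j + 1 - t) t (by omega) h.1
      omega
    · rw [if_neg h]
      rcases Nat.eq_zero_or_pos t with h0 | h0
      · exact (β.2.2.2 t (Or.inl h0)).symm
      · exact (β.2.2.2 t (Or.inr (by omega))).symm
  let e : {f : ℕ →₀ ℕ // ∑ i ∈ f.support, f i * m ^ i = n} ≃
      {β : ℕ → ℕ // β j ≤ α j ∧ (∀ t, 1 ≤ t → t < j → β t ≤ α t + m * β (t + 1)) ∧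
        (∀ t, t = 0 ∨ j < t → β t = 0)} :=
    { toFun := fun f => ⟨F f, hFmem f⟩
      invFun := fun β => ⟨G β, hGsum β⟩
      left_inv := fun f => Subtype.ext (hGF f)
      right_inv := fun β => Subtype.ext (hFG β) }
  exact ⟨⟨e⟩, Nat.card_congr e⟩
end

section
/- For m ≥ 2 and n with base m representation (α_j,...,α_0), the map φ sending an m-ary partition λ = (λ_ℓ,...,λ_0) of n (with λ_k set to 0 for ℓ < k ≤ j) to the sequence (β_j,...,β_1), where β_i = Σ_{k=i}^{j} m^{k-i}·(α_k − λ_k), produces a sequence with 0 ≤ β_j ≤ α_j and 0 ≤ β_t ≤ α_t + m·β_{t+1} for 1 ≤ t ≤ j−1; i.e., φ is well-defined from B_m(n) to S_m(n). -/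
/-! Write `d k = α k - λ k`. Since `α` and `λ` both represent `n`, `∑_{k ≤ j} d k m^k = 0`, so
`m^t β_t = ∑_{k < t} (λ k - α k) m^k ≥ -∑_{k < t} α k m^k > -m^t`, the last step because the `α k`
are base-`m` digits; hence `β_t ≥ 0`. The upper bounds come from the Horner recurrence
`β_t = d t + m β_{t+1}` and `λ t ≥ 0`. -/

open Finset

section HornerTail

variable {R : Type*} [CommSemiring R] (m : R) (f : ℕ → R)

theorem sum_Icc_pow_sub_mul_eq_add {t j : ℕ} (ht : t < j) :
    ∑ k ∈ Icc t j, m ^ (k - t) * f k = f t + m * ∑ k ∈ Icc (t + 1) j, m ^ (k - (t + 1)) * f k := by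
  rw [Icc_eq_cons_Ioc ht.le, sum_cons, ← Icc_add_one_left_eq_Ioc, Nat.sub_self, pow_zero, one_mul,
    mul_sum]
  congr 1
  refine sum_congr rfl fun k hk => ?_
  have hk : t + 1 ≤ k := (mem_Icc.mp hk).1
  rw [← mul_assoc, ← pow_succ', show k - (t + 1) + 1 = k - t by omega]

theorem pow_mul_sum_Icc_pow_sub_mul_add_sum_range {t j : ℕ} (ht : t ≤ j) :
    m ^ t * ∑ k ∈ Icc t j, m ^ (k - t) * f k + ∑ k ∈ range t, f k * m ^ k =
      ∑ k ∈ range (j + 1), f k * m ^ k := by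
  rw [← sum_range_add_sum_Ico _ (by omega : t ≤ j + 1), Ico_add_one_right_eq_Icc, add_comm, mul_sum]
  congr 1
  refine sum_congr rfl fun k hk => ?_
  rw [← mul_assoc, ← pow_add, Nat.add_sub_cancel' (mem_Icc.mp hk).1, mul_comm]

end HornerTail

theorem sum_range_digit_mul_pow_lt {m : ℕ} {α : ℕ → ℕ} {t : ℕ} (hα : ∀ k < t, α k < m) :
    ∑ k ∈ range t, α k * m ^ k < m ^ t := by
  induction t with
  | zero => simp
  | succ t ih =>
    have hlow := ih fun k hk => hα k (Nat.lt_succ_of_lt hk)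
    have hdigit : α t + 1 ≤ m := hα t (Nat.lt_succ_self t)
    calc ∑ k ∈ range (t + 1), α k * m ^ k
        < m ^ t + α t * m ^ t := by rw [sum_range_succ]; omega
      _ = (α t + 1) * m ^ t := by ring
      _ ≤ m ^ (t + 1) := by rw [pow_succ']; exact Nat.mul_le_mul_right _ hdigit

theorem sum_Icc_pow_sub_mul_sub_nonneg {m j t : ℕ} (hm : 0 < m) {α l : ℕ → ℕ}
    (hα : ∀ k, k ≤ j → α k < m)
    (hαl : ∑ k ∈ range (j + 1), α k * m ^ k = ∑ k ∈ range (j + 1), l k * m ^ k) (ht : t ≤ j) :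
    0 ≤ ∑ k ∈ Icc t j, (m : ℤ) ^ (k - t) * ((α k : ℤ) - l k) := by
  set β := ∑ k ∈ Icc t j, (m : ℤ) ^ (k - t) * ((α k : ℤ) - l k)
  have hαlℤ : ∑ k ∈ range (j + 1), (α k : ℤ) * (m : ℤ) ^ k =
      ∑ k ∈ range (j + 1), (l k : ℤ) * (m : ℤ) ^ k := by
    exact_mod_cast hαl
  have hhorner := pow_mul_sum_Icc_pow_sub_mul_add_sum_range (m : ℤ) (fun k => (α k : ℤ) - l k) ht
  simp only [sub_mul, sum_sub_distrib] at hhorner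
  have hdigits : ∑ k ∈ range t, α k * m ^ k < m ^ t :=
    sum_range_digit_mul_pow_lt fun k hk => hα k (by omega)
  have hlow : (0 : ℤ) ≤ ∑ k ∈ range t, (l k : ℤ) * (m : ℤ) ^ k := by positivity
  have hpos : (0 : ℤ) < (m : ℤ) ^ t * (β + 1) := by linarith
  have := pos_of_mul_pos_right hpos (by positivity)
  omega

theorem phi_well_defined_general (m n j : ℕ) (α l : ℕ → ℕ) (hm : 2 ≤ m) (hd : ∀ i, i ≤ j → α i < m)
    (hn : n = ∑ i ∈ Finset.range (j + 1), α i * m ^ i)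
    (hls : ∑ i ∈ Finset.range (j + 1), l i * m ^ i = n)
    (β : ℕ → ℤ)
    (hβ : ∀ i, β i = ∑ k ∈ Finset.Icc i j, (m : ℤ) ^ (k - i) * ((α k : ℤ) - (l k : ℤ))) :
    (0 ≤ β j ∧ β j ≤ (α j : ℤ)) ∧
    ∀ t, 1 ≤ t → t < j → 0 ≤ β t ∧ β t ≤ (α t : ℤ) + (m : ℤ) * β (t + 1) := by
  have hnonneg : ∀ t, t ≤ j → 0 ≤ β t := fun t ht => (hβ t).symm ▸
    sum_Icc_pow_sub_mul_sub_nonneg (by omega) hd (hn.symm.trans hls.symm) ht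
  have htop : β j = α j - l j := by simp [hβ]
  have hrec : ∀ t, t < j → β t = ((α t : ℤ) - l t) + m * β (t + 1) := fun t ht => by
    rw [hβ, hβ, sum_Icc_pow_sub_mul_eq_add _ _ ht]
  refine ⟨⟨hnonneg j le_rfl, by omega⟩, fun t _ ht => ⟨hnonneg t ht.le, ?_⟩⟩
  rw [hrec t ht]
  omega

theorem phi_well_defined (m n j : ℕ) (α l : ℕ → ℕ) (hm : 2 ≤ m) (hj : 0 < α j) (hd : ∀ i, i ≤ j → α i < m)
    (hn : n = ∑ i ∈ Finset.range (j + 1), α i * m ^ i)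
    (hl0 : ∀ k, j < k → l k = 0)
    (hls : ∑ i ∈ Finset.range (j + 1), l i * m ^ i = n)
    (β : ℕ → ℤ)
    (hβ : ∀ i, β i = ∑ k ∈ Finset.Icc i j, (m : ℤ) ^ (k - i) * ((α k : ℤ) - (l k : ℤ))) :
    (0 ≤ β j ∧ β j ≤ (α j : ℤ)) ∧
    ∀ t, 1 ≤ t → t < j → 0 ≤ β t ∧ β t ≤ (α t : ℤ) + (m : ℤ) * β (t + 1) :=
  phi_well_defined_general m n j α l hm hd hn hls β hβ
end

section
/- Let m ≥ 2, and let λ = (λ_j, ..., λ_0) be an m-ary partition of n (possibly with λ_j = 0), where (α_j,...,α_0) is the base m representation of n. Then for every t with 1 ≤ t ≤ j, the inequality λ_t ≤ α_t + Σ_{k=1}^{j−t} (α_{t+k} − λ_{t+k})·m^k holds; equivalently, Σ_{k=t}^{j} λ_k·m^k ≤ Σ_{k=t}^{j} α_k·m^k + (m^t − 1). -/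
lemma geom_aux (m t : ℕ) (hm : 1 ≤ m) :
    ∑ i ∈ Finset.range t, (m - 1) * m ^ i = m ^ t - 1 := by
  induction t with
  | zero => simp
  | succ t ih =>
    rw [Finset.sum_range_succ, ih]
    have h1 : 1 ≤ m ^ t := Nat.one_le_pow _ _ hm
    have h2 : m ^ (t + 1) = m * m ^ t := by ring
    have h3 : m ^ t ≤ m * m ^ t := Nat.le_mul_of_pos_left _ hm
    have h4 : (m - 1) * m ^ t = m * m ^ t - m ^ t := by
      rw [Nat.sub_mul, one_mul]
    omega

theorem partial_sum_inequality (m n j : ℕ) (α l : ℕ → ℕ) (hm : 2 ≤ m) (hj : 0 < α j) (hd : ∀ i, i ≤ j → α i < m)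
    (hn : n = ∑ i ∈ Finset.range (j + 1), α i * m ^ i)
    (hls : ∑ i ∈ Finset.range (j + 1), l i * m ^ i = n) :
    ∀ t, 1 ≤ t → t ≤ j →
      ∑ k ∈ Finset.Icc t j, l k * m ^ k ≤
        (∑ k ∈ Finset.Icc t j, α k * m ^ k) + (m ^ t - 1) := by
  intro t ht1 htj
  have hsplit : ∀ f : ℕ → ℕ, ∑ i ∈ Finset.range (j + 1), f i =
      (∑ i ∈ Finset.range t, f i) + ∑ k ∈ Finset.Icc t j, f k := by
    intro f
    rw [Finset.range_eq_Ico, ← Finset.Ico_add_one_right_eq_Icc,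
      ← Finset.sum_Ico_consecutive _ (Nat.zero_le t) (by omega),
      ← Finset.range_eq_Ico]
  have hl := hsplit (fun i => l i * m ^ i)
  have ha := hsplit (fun i => α i * m ^ i)
  simp only at hl ha
  have hlow : ∑ k ∈ Finset.Icc t j, l k * m ^ k ≤ n := by omega
  have hhead : ∑ i ∈ Finset.range t, α i * m ^ i ≤ m ^ t - 1 := by
    rw [← geom_aux m t (by omega)]
    apply Finset.sum_le_sum
    intro i hi
    have : α i < m := hd i (by simp at hi; omega)
    exact Nat.mul_le_mul_right _ (by omega)
  omega
end

section
/- For m ≥ 2 and n with base m representation (α_j,...,α_0), b_m(mn) ≡ ∏_{i=0}^{j} (α_i + 1) (mod m). -/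
/-!
Encode an `m`-ary partition by the multiplicities `f i` of its parts `m ^ i`, so that it
partitions its weight `∑ f i * m ^ i`. Splitting off the number `c` of parts equal to `1`, a
partition of `n` is a pair `(c, g)` with `c + m k = n`, where `g` is a partition of `k`, read
with every part multiplied by `m`. As `c` is determined by `k`, `b_m(n)` counts the partitions
of all `k ≤ ⌊n/m⌋`: so `b_m(mN) = ∑_{k ≤ N} b_m(k)`, and `b_m(k) = b_m(m⌊k/m⌋)` is constant on
blocks of `m` consecutive `k`. For `N = r + mq` with `r < m` the full blocks contribute a
multiple of `m`, leaving `b_m(mN) ≡ (r + 1) b_m(mq) (mod m)`; induction over the digits of `N`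
gives the product.
-/

open Finset Finsupp

namespace Finsupp

variable {M : Type*} [AddCommMonoid M]

noncomputable def natConsEquiv : M × (ℕ →₀ M) ≃ (ℕ →₀ M) where
  toFun p := single 0 p.1 + mapDomain Nat.succ p.2
  invFun f := (f 0, comapDomain Nat.succ f Nat.succ_injective.injOn)
  left_inv := by
    rintro ⟨c, g⟩
    ext i
    · simp [mapDomain_of_notMem_range]
    · simp [mapDomain_apply Nat.succ_injective]
  right_inv f := by
    ext (_ | i)
    · simp [mapDomain_of_notMem_range]
    · simp [mapDomain_apply Nat.succ_injective]

lemma weight_natConsEquiv (m c : ℕ) (g : ℕ →₀ ℕ) :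
    weight (m ^ ·) (natConsEquiv (c, g)) = c + m * weight (m ^ ·) g := by
  change weight _ (single 0 c + mapDomain Nat.succ g) = _
  rw [map_add, weight_single, weight_apply, weight_apply,
    sum_mapDomain_index (by simp) (fun _ _ _ ↦ add_smul _ _ _), Finsupp.mul_sum]
  simp only [smul_eq_mul, pow_zero, mul_one, pow_succ]
  exact congrArg _ (sum_congr fun _ _ ↦ by ring)

lemma finite_setOf_weight_le {σ : Type*} {w : σ → ℕ} (hw : ∀ i, w i ≠ 0) {N : ℕ}
    (hN : {i | w i ≤ N}.Finite) : {f : σ →₀ ℕ | weight w f ≤ N}.Finite := by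
  classical
  refine (Set.finite_Iic (indicator hN.toFinset fun _ _ ↦ N)).subset fun f hf i ↦ ?_
  by_cases hfi : f i = 0
  · simp [hfi]
  have hi : i ∈ hN.toFinset := by
    simpa using (le_weight_of_ne_zero' w hfi).trans hf
  simpa [indicator_apply, hi] using (le_weight w (hw i) f).trans hf

end Finsupp

def Equiv.subtypeAddEqEquivSubtypeLe {α : Type*} (φ : α → ℕ) (n : ℕ) :
    {p : ℕ × α // p.1 + φ p.2 = n} ≃ {x // φ x ≤ n} where
  toFun p := ⟨p.1.2, by have := p.2; omega⟩
  invFun x := ⟨(n - φ x, x), by have := x.2; dsimp only; omega⟩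
  left_inv := by
    rintro ⟨⟨c, x⟩, h⟩
    ext <;> dsimp only at h ⊢
    omega
  right_inv _ := rfl

def Equiv.subtypeLeEquivSigmaFin {α : Type*} (φ : α → ℕ) (N : ℕ) :
    {x // φ x ≤ N} ≃ Σ k : Fin (N + 1), {x // φ x = k} where
  toFun x := ⟨⟨φ x, Nat.lt_succ_of_le x.2⟩, x, rfl⟩
  invFun p := ⟨p.2, by rw [p.2.2]; exact Nat.le_of_lt_succ p.1.2⟩
  left_inv _ := rfl
  right_inv := by
    rintro ⟨k, x, hx⟩
    exact Sigma.subtype_ext (Fin.ext hx) rfl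

lemma Nat.card_subtype_le_eq_sum {α : Type*} (φ : α → ℕ) (N : ℕ)
    [∀ k, Finite {x // φ x = k}] :
    Nat.card {x // φ x ≤ N} = ∑ k ∈ range (N + 1), Nat.card {x // φ x = k} := by
  rw [Nat.card_congr (Equiv.subtypeLeEquivSigmaFin φ N), Nat.card_sigma,
    Fin.sum_univ_eq_sum_range (fun k ↦ Nat.card {x // φ x = k})]

lemma Finset.sum_range_mul_comp_div {M : Type*} [AddCommMonoid M] (f : ℕ → M) (m q : ℕ) :
    ∑ k ∈ range (m * q), f (k / m) = m • ∑ t ∈ range q, f t := by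
  induction q with
  | zero => simp
  | succ q ih =>
    have hblock : ∀ s ∈ range m, f ((m * q + s) / m) = f q := fun s hs ↦ by
      rw [mem_range] at hs
      rw [Nat.mul_add_div (by omega), Nat.div_eq_of_lt hs, add_zero]
    rw [Nat.mul_succ, sum_range_add, ih, sum_congr rfl hblock, sum_const, card_range,
      sum_range_succ, smul_add]

section

variable {m : ℕ}

lemma finite_setOf_weight_pow_le (hm : 1 < m) (N : ℕ) :
    {f : ℕ →₀ ℕ | weight (m ^ ·) f ≤ N}.Finite :=
  finite_setOf_weight_le (fun i ↦ pow_ne_zero i (by omega))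
    ((Set.finite_Iic N).subset fun _ hi ↦ (Nat.lt_pow_self hm).le.trans hi)

lemma bm_eq_card_weight_eq (m n : ℕ) :
    bm m n = Nat.card {f : ℕ →₀ ℕ // weight (m ^ ·) f = n} := by
  simp [bm, weight_apply, Finsupp.sum]

lemma bm_eq_card_weight_le (hm : 0 < m) (n : ℕ) :
    bm m n = Nat.card {g : ℕ →₀ ℕ // weight (m ^ ·) g ≤ n / m} := by
  rw [bm_eq_card_weight_eq]
  refine Nat.card_congr <| (natConsEquiv.subtypeEquiv fun p ↦ ?_).symm.trans <|
    (Equiv.subtypeAddEqEquivSubtypeLe (m * weight (m ^ ·) ·) n).trans <|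
    Equiv.subtypeEquivRight fun g ↦ ?_
  · rw [weight_natConsEquiv]
  · rw [Nat.le_div_iff_mul_le hm, mul_comm]

lemma bm_eq_bm_mul_div (hm : 0 < m) (n : ℕ) : bm m n = bm m (m * (n / m)) := by
  rw [bm_eq_card_weight_le hm, bm_eq_card_weight_le hm, Nat.mul_div_cancel_left _ hm]

lemma bm_mul_eq_sum (hm : 1 < m) (N : ℕ) : bm m (m * N) = ∑ k ∈ range (N + 1), bm m k := by
  have (k : ℕ) : Finite {f : ℕ →₀ ℕ // weight (m ^ ·) f = k} :=
    ((finite_setOf_weight_pow_le hm k).subset fun _ h ↦ h.le).to_subtype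
  rw [bm_eq_card_weight_le (by omega), Nat.mul_div_cancel_left _ (by omega),
    Nat.card_subtype_le_eq_sum]
  exact sum_congr rfl fun k _ ↦ (bm_eq_card_weight_eq m k).symm

lemma bm_zero (hm : 0 < m) : bm m 0 = 1 := by
  have : NonTorsionWeight ℕ (m ^ · : ℕ → ℕ) :=
    nonTorsionWeight_of ℕ _ fun i ↦ pow_ne_zero i hm.ne'
  simp [bm_eq_card_weight_eq, weight_eq_zero_iff_eq_zero]

lemma bm_mul_add_mul_modEq (hm : 1 < m) {r : ℕ} (hr : r < m) (q : ℕ) :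
    bm m (m * (r + m * q)) ≡ (r + 1) * bm m (m * q) [MOD m] := by
  have hblocks : ∑ k ∈ range (m * q), bm m k = m * ∑ t ∈ range q, bm m (m * t) := by
    simpa [← bm_eq_bm_mul_div (by omega : 0 < m)] using
      sum_range_mul_comp_div (fun t ↦ bm m (m * t)) m q
  have hlast : ∀ s ∈ range (r + 1), bm m (m * q + s) = bm m (m * q) := fun s hs ↦ by
    rw [mem_range] at hs
    rw [bm_eq_bm_mul_div (by omega), Nat.mul_add_div (by omega), Nat.div_eq_of_lt (by omega),
      add_zero]
  rw [bm_mul_eq_sum hm, show r + m * q + 1 = m * q + (r + 1) by ring, sum_range_add, hblocks,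
    sum_congr rfl hlast, sum_const, card_range, smul_eq_mul, Nat.ModEq, Nat.mul_add_mod]

lemma bm_mul_sum_digits_modEq (hm : 1 < m) (j : ℕ) {α : ℕ → ℕ} (hα : ∀ i < j, α i < m) :
    bm m (m * ∑ i ∈ range j, α i * m ^ i) ≡ ∏ i ∈ range j, (α i + 1) [MOD m] := by
  induction j generalizing α with
  | zero => rw [range_zero, sum_empty, prod_empty, mul_zero, bm_zero (by omega)]
  | succ j ih =>
    have hsum : ∑ i ∈ range (j + 1), α i * m ^ i
        = α 0 + m * ∑ i ∈ range j, α (i + 1) * m ^ i := by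
      rw [sum_range_succ', Finset.mul_sum, add_comm]
      simp only [pow_zero, mul_one, pow_succ]
      exact congrArg _ (sum_congr rfl fun _ _ ↦ by ring)
    rw [hsum, prod_range_succ', mul_comm _ (α 0 + 1)]
    exact (bm_mul_add_mul_modEq hm (hα 0 (by omega)) _).trans
      (.mul_left _ (ih fun i hi ↦ hα (i + 1) (by omega)))

end

theorem bm_congruence_general (m n j : ℕ) (α : ℕ → ℕ) (hm : 2 ≤ m) (hd : ∀ i, i ≤ j → α i < m)
    (hn : n = ∑ i ∈ Finset.range (j + 1), α i * m ^ i) :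
    bm m (m * n) ≡ ∏ i ∈ Finset.range (j + 1), (α i + 1) [MOD m] :=
  hn ▸ bm_mul_sum_digits_modEq hm (j + 1) fun i hi ↦ hd i (Nat.lt_succ_iff.mp hi)

theorem bm_congruence (m n j : ℕ) (α : ℕ → ℕ) (hm : 2 ≤ m) (hj : 0 < α j) (hd : ∀ i, i ≤ j → α i < m)
    (hn : n = ∑ i ∈ Finset.range (j + 1), α i * m ^ i) :
    bm m (m * n) ≡ ∏ i ∈ Finset.range (j + 1), (α i + 1) [MOD m] :=
  bm_congruence_general m n j α hm hd hn
end

section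
/- For m ≥ 2, define the j-fold sum f(α_j,...,α_0) = Σ_{k_j=0}^{α_j} Σ_{k_{j-1}=0}^{α_{j-1}+m·k_j} ... Σ_{k_1=0}^{α_1+m·k_2} 1 where all α_i are nonnegative integers. Then f(α_j,...,α_0) ≡ ∏_{i=1}^{j} (α_i + 1) (mod m). -/
lemma sum_modEq' {ι : Type*} {n : ℕ} {s : Finset ι} {f g : ι → ℕ}
    (h : ∀ i ∈ s, f i ≡ g i [MOD n]) :
    (∑ i ∈ s, f i) ≡ ∑ i ∈ s, g i [MOD n] := by
  unfold Nat.ModEq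
  rw [Finset.sum_nat_mod, Finset.sum_nat_mod s n g]
  exact congrArg (· % n) (Finset.sum_congr rfl fun i hi => h i hi)

lemma nestedSum_head (m : ℕ) : ∀ (rest : List ℕ) (a : ℕ),
    nestedSum m (a :: rest) ≡ (a + 1) * ((rest.map (· + 1)).prod) [MOD m]
  | [], a => by
    simp only [nestedSum, List.map_nil, List.prod_nil, mul_one]
    exact Nat.ModEq.refl _
  | b :: rest, a => by
    have IH := nestedSum_head m rest
    have hP : ∀ k, nestedSum m ((b + m * k) :: rest) ≡
        (b + 1) * ((rest.map (· + 1)).prod) [MOD m] := by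
      intro k
      refine (IH (b + m * k)).trans ?_
      have h1 : b + m * k + 1 ≡ b + 1 [MOD m] := by
        have hd : m * k ≡ 0 [MOD m] := (Nat.modEq_zero_iff_dvd).2 ⟨k, rfl⟩
        calc b + m * k + 1 = (b + 1) + m * k := by ring
          _ ≡ (b + 1) + 0 [MOD m] := Nat.ModEq.add_left _ hd
          _ = b + 1 := by ring
      exact h1.mul_right _
    calc nestedSum m (a :: b :: rest)
        = ∑ k ∈ Finset.range (a + 1), nestedSum m ((b + m * k) :: rest) := by
          rw [nestedSum]
      _ ≡ ∑ _k ∈ Finset.range (a + 1), (b + 1) * ((rest.map (· + 1)).prod) [MOD m] :=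
          sum_modEq' fun k _ => hP k
      _ = (a + 1) * (((b :: rest).map (· + 1)).prod) := by
          simp [Finset.sum_const, mul_assoc]

theorem nestedSum_congruence (m j : ℕ) (α : ℕ → ℕ) (hm : 2 ≤ m) :
    nestedSum m ((List.range j).map fun i => α (j - i)) ≡
      ∏ i ∈ Finset.Icc 1 j, (α i + 1) [MOD m] := by
  have hprod : ∏ i ∈ Finset.Icc 1 j, (α i + 1) = ∏ i ∈ Finset.range j, (α (j - i) + 1) := by
    rw [← Finset.prod_range_reflect (fun i => α (j - i) + 1) j,
      ← Finset.Ico_add_one_right_eq_Icc, Finset.prod_Ico_eq_prod_range]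
    apply Finset.prod_congr (by simp)
    intro i hi
    simp only [Finset.mem_range] at hi
    congr 2
    omega
  rw [hprod]
  cases j with
  | zero =>
    simp only [List.range_zero, List.map_nil, nestedSum, Finset.range_zero,
      Finset.prod_empty]
    exact Nat.ModEq.refl _
  | succ n =>
    rw [List.range_succ_eq_map, List.map_cons]
    refine (nestedSum_head m _ _).trans ?_
    have hmap : (((List.range n).map Nat.succ).map fun i => α (n + 1 - i)).map (· + 1)
        = (List.range n).map fun i => α (n - i) + 1 := by
      rw [List.map_map, List.map_map]
      apply List.map_congr_left
      intro i hi
      simp only [List.mem_range] at hi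
      simp only [Function.comp]
      congr 2
      omega
    rw [hmap]
    have h2 : ((List.range n).map fun i => α (n - i) + 1).prod
        = ∏ i ∈ Finset.range n, (α (n - i) + 1) := rfl
    rw [h2, Finset.prod_range_succ']
    have h4 : ∏ x ∈ Finset.range n, (α (n + 1 - (x + 1)) + 1)
        = ∏ x ∈ Finset.range n, (α (n - x) + 1) :=
      Finset.prod_congr rfl fun x _ => by congr 2; omega
    rw [h4, mul_comm]
end

section
/- For m ≥ 2 and n with base m representation (α_j,...,α_0), c_m(mn) ≡ α_0 + (α_0 − 1)·Σ_{i=1}^{j} (α_1 − χ_1)(α_2 − χ_2)···(α_i − χ_i) (mod m), where χ_i = 0 if α_{i-1} > 0 and χ_i = 1 if α_{i-1} = 0. -/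
noncomputable def cm (m n : ℕ) : ℕ :=
  Nat.card {f : ℕ →₀ ℕ // (∑ i ∈ f.support, f i * m ^ i = n) ∧
    ∀ i k, f i ≠ 0 → k ≤ i → f k ≠ 0}

def chi (α : ℕ → ℕ) (i : ℕ) : ℕ := if α (i - 1) = 0 then 1 else 0

/-!
A gap-free `m`-ary partition of `N ≥ 1` contains the part `1`. Removing all parts equal to `1` and
dividing the others by `m` is a bijection onto the gap-free partitions of the numbers `r` with
`m * r < N`, so `c(N) = S(⌈N / m⌉)` where `S(n) = ∑_{r < n} c(r)`; in particular `c(m n) = S(n)`.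
Summing this recursion over blocks of `m` consecutive arguments gives, modulo `m`,
`S(m q) ≡ 1 - S(q)` for `q ≥ 1` and `S(m q + a + 1) ≡ 1 + a S(q + 1)` for `a < m`. Peeling off
the base-`m` digits of `n` one at a time with these two congruences yields the formula.
-/

open Finset

namespace Finset

@[to_additive]
lemma prod_Icc_succ_eq_mul_prod_Icc_shift {M : Type*} [CommMonoid M] {a b : ℕ} (hab : a ≤ b + 1)
    (f : ℕ → M) : ∏ i ∈ Icc a (b + 1), f i = f a * ∏ i ∈ Icc a b, f (i + 1) := by
  rw [← Ico_add_one_right_eq_Icc, prod_eq_prod_Ico_succ_bot (by omega), ← Ico_add_one_right_eq_Icc,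
    prod_Ico_add']

lemma sum_range_succ_mul_pow {R : Type*} [CommSemiring R] (a : ℕ → R) (x : R) (j : ℕ) :
    ∑ i ∈ range (j + 1), a i * x ^ i = a 0 + x * ∑ i ∈ range j, a (i + 1) * x ^ i := by
  rw [sum_range_succ', pow_zero, mul_one, add_comm, mul_sum]
  congr 1
  exact sum_congr rfl fun i _ => by ring

end Finset

namespace Finsupp

variable {M : Type*}

noncomputable def natCons [AddCommMonoid M] (a : M) (g : ℕ →₀ M) : ℕ →₀ M :=
  single 0 a + g.mapDomain Nat.succ

noncomputable def natTail [Zero M] (f : ℕ →₀ M) : ℕ →₀ M :=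
  f.comapDomain Nat.succ Nat.succ_injective.injOn

@[simp]
lemma natTail_apply [Zero M] (f : ℕ →₀ M) (i : ℕ) : natTail f i = f (i + 1) := rfl

section AddCommMonoid

variable [AddCommMonoid M] (a : M) (g : ℕ →₀ M)

@[simp]
lemma natCons_zero : natCons a g 0 = a := by
  simp [natCons, mapDomain_of_notMem_range _ _ (fun ⟨k, hk⟩ => Nat.succ_ne_zero k hk)]

@[simp]
lemma natCons_succ (i : ℕ) : natCons a g (i + 1) = g i := by
  simp [natCons, mapDomain_apply Nat.succ_injective]

@[simp]
lemma natTail_natCons : natTail (natCons a g) = g := by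
  ext i; simp

lemma natCons_natTail (f : ℕ →₀ M) : natCons (f 0) (natTail f) = f := by
  ext (_ | i) : 1 <;> simp

end AddCommMonoid

lemma weight_natCons (m a : ℕ) (g : ℕ →₀ ℕ) :
    weight (m ^ ·) (natCons a g) = a + m * weight (m ^ ·) g := by
  rw [natCons, map_add, weight_single, weight_apply, weight_apply,
    sum_mapDomain_index (by simp) (fun _ _ _ => add_smul _ _ _), mul_sum]
  simp [Finsupp.sum, pow_succ', mul_left_comm]

lemma weight_eq_natTail (m : ℕ) (f : ℕ →₀ ℕ) :
    weight (m ^ ·) f = f 0 + m * weight (m ^ ·) (natTail f) := by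
  conv_lhs => rw [← natCons_natTail f]
  exact weight_natCons m _ _

end Finsupp

section GapFreePartition

open Finsupp

def GapFree (f : ℕ →₀ ℕ) : Prop := ∀ i k, f i ≠ 0 → k ≤ i → f k ≠ 0

namespace GapFree

variable {f g : ℕ →₀ ℕ}

lemma natTail (hf : GapFree f) : GapFree (natTail f) :=
  fun i k hi hk => hf (i + 1) (k + 1) hi (by omega)

lemma natCons {a : ℕ} (ha : a ≠ 0) (hg : GapFree g) : GapFree (natCons a g) := by
  rintro (_ | i) (_ | k) hi hk
  · simpa
  · omega
  · simpa
  · simpa using hg i k (by simpa using hi) (by omega)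

lemma apply_zero_ne_zero (hf : GapFree f) (h : f ≠ 0) : f 0 ≠ 0 := by
  obtain ⟨i, hi⟩ := Finsupp.ne_iff.1 h
  exact hf i 0 hi i.zero_le

end GapFree

abbrev GapFreePartition (m N : ℕ) : Type := {f : ℕ →₀ ℕ // weight (m ^ ·) f = N ∧ GapFree f}

lemma cm_eq_card (m N : ℕ) : cm m N = Nat.card (GapFreePartition m N) := rfl

lemma GapFreePartition.apply_zero_ne_zero {m N : ℕ} (hN : N ≠ 0) (f : GapFreePartition m N) :
    f.1 0 ≠ 0 :=
  f.2.2.apply_zero_ne_zero fun h => hN (by simpa [h] using f.2.1.symm)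

/-- Strip the parts equal to `1` and divide the remaining parts by `m`; the index `r` is the weight
of the result, and `r ≤ q` says exactly that at least one part `1` was stripped. -/
noncomputable def gapFreePartitionEquiv {m q b : ℕ} (hb : 0 < b) (hbm : b ≤ m) :
    GapFreePartition m (m * q + b) ≃ Σ r : Fin (q + 1), GapFreePartition m r where
  toFun f := ⟨⟨weight (m ^ ·) (natTail f.1), by
      have h := weight_eq_natTail m f.1
      have h0 := f.apply_zero_ne_zero (by omega)
      refine Nat.lt_of_mul_lt_mul_left (a := m) ?_
      rw [f.2.1] at h
      rw [Nat.mul_succ]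
      omega⟩, natTail f.1, rfl, f.2.2.natTail⟩
  invFun p := ⟨natCons (m * q + b - m * p.1) p.2.1, by
      have := Nat.mul_le_mul_left m (Nat.le_of_lt_succ p.1.2)
      rw [weight_natCons, p.2.2.1]
      omega, by
      have := Nat.mul_le_mul_left m (Nat.le_of_lt_succ p.1.2)
      exact p.2.2.2.natCons (by omega)⟩
  left_inv f := by
    have h := weight_eq_natTail m f.1
    rw [f.2.1] at h
    refine Subtype.ext (.trans ?_ (natCons_natTail f.1))
    dsimp only
    congr 1
    omega
  right_inv p := Sigma.subtype_ext (Fin.ext (by simpa using p.2.2.1)) (natTail_natCons _ _)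

lemma cm_zero (m : ℕ) : cm m 0 = 1 := by
  have eq_zero (f : GapFreePartition m 0) : f.1 = 0 := by
    by_contra h
    have := weight_eq_natTail m f.1
    exact f.2.2.apply_zero_ne_zero h (by omega)
  rw [cm_eq_card, Nat.card_eq_one_iff_unique]
  exact ⟨⟨fun f g => Subtype.ext ((eq_zero f).trans (eq_zero g).symm)⟩,
    ⟨⟨0, map_zero _, fun _ _ h => absurd rfl h⟩⟩⟩

lemma exists_eq_mul_add_of_ne_zero {m N : ℕ} (hm : 0 < m) (hN : N ≠ 0) :
    ∃ q b, 0 < b ∧ b ≤ m ∧ N = m * q + b :=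
  ⟨(N - 1) / m, (N - 1) % m + 1, by omega, Nat.mod_lt _ hm, by
    have := Nat.div_add_mod (N - 1) m; omega⟩

lemma finite_gapFreePartition {m : ℕ} (hm : 0 < m) (N : ℕ) : Finite (GapFreePartition m N) := by
  induction N using Nat.strong_induction_on with
  | _ N ih =>
    rcases eq_or_ne N 0 with rfl | hN
    · exact Nat.finite_of_card_ne_zero (by simp [← cm_eq_card, cm_zero])
    obtain ⟨q, b, hb, hbm, rfl⟩ := exists_eq_mul_add_of_ne_zero hm hN
    have (r : Fin (q + 1)) : Finite (GapFreePartition m r) :=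
      ih r (by have := Nat.le_mul_of_pos_left q hm; omega)
    exact Finite.of_equiv _ (gapFreePartitionEquiv hb hbm).symm

noncomputable def cmSum (m n : ℕ) : ℕ := ∑ r ∈ range n, cm m r

lemma cm_mul_add {m q b : ℕ} (hb : 0 < b) (hbm : b ≤ m) :
    cm m (m * q + b) = cmSum m (q + 1) := by
  have := finite_gapFreePartition (m := m) (by omega)
  rw [cm_eq_card, Nat.card_congr (gapFreePartitionEquiv hb hbm), Nat.card_sigma]
  exact Fin.sum_univ_eq_sum_range (cm m) (q + 1)

end GapFreePartition

lemma cm_mul {m q : ℕ} (hm : 0 < m) (hq : q ≠ 0) : cm m (m * q) = cmSum m q := by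
  obtain ⟨q, rfl⟩ := Nat.exists_eq_succ_of_ne_zero hq
  exact cm_mul_add hm le_rfl

lemma cmSum_of_le {m a : ℕ} (ha : a ≤ m) : cmSum m a = a := by
  rw [cmSum, sum_congr rfl (g := fun _ => 1), sum_const, card_range, smul_eq_mul, mul_one]
  intro r hr
  rcases Nat.eq_zero_or_pos r with rfl | hr0
  · exact cm_zero m
  · simpa [cmSum, cm_zero] using cm_mul_add (q := 0) hr0 (by simp at hr; omega)

lemma cmSum_mul_add {m q a : ℕ} (hq : q ≠ 0) (ha : 0 < a) (ham : a ≤ m) :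
    cmSum m (m * q + a) = cmSum m (m * q) + cmSum m q + (a - 1) * cmSum m (q + 1) := by
  obtain ⟨a, rfl⟩ := Nat.exists_eq_succ_of_ne_zero ha.ne'
  have hb (b : ℕ) (hb : b ∈ range a) : cm m (m * q + (b + 1)) = cmSum m (q + 1) :=
    cm_mul_add b.succ_pos (by simp at hb; omega)
  rw [cmSum, sum_range_add, sum_range_succ', sum_congr rfl hb, sum_const, card_range,
    smul_eq_mul, add_zero, cm_mul (by omega) hq, Nat.succ_sub_one]
  unfold cmSum
  ring

lemma cmSum_mul_add_cmSum {m q : ℕ} (hm : 0 < m) (hq : q ≠ 0) :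
    (cmSum m (m * q) + cmSum m q : ZMod m) = 1 := by
  induction q, Nat.one_le_iff_ne_zero.2 hq using Nat.le_induction with
  | base => simp [cmSum_of_le, cmSum_of_le (a := 1) hm]
  | succ q hq ih =>
    rw [mul_add_one, cmSum_mul_add (by omega) hm le_rfl, Nat.cast_add, Nat.cast_add, Nat.cast_mul,
      Nat.cast_sub hm, ZMod.natCast_self, ← ih (by omega)]
    ring

lemma cmSum_mul_add_succ {m q a : ℕ} (ha : a < m) :
    (cmSum m (m * q + a + 1) : ZMod m) = 1 + a * cmSum m (q + 1) := by
  rcases eq_or_ne q 0 with rfl | hq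
  · rw [mul_zero, zero_add, cmSum_of_le ha, cmSum_of_le (by omega : 0 + 1 ≤ m)]
    push_cast
    ring
  · rw [add_assoc, cmSum_mul_add hq a.succ_pos ha, Nat.succ_sub_one]
    push_cast
    rw [cmSum_mul_add_cmSum (by omega) hq]

def digitProdSum {R : Type*} [CommRing R] (α : ℕ → ℕ) (j : ℕ) : R :=
  ∑ i ∈ Icc 1 j, ∏ t ∈ Icc 1 i, ((α t : R) - chi α t)

lemma digitProdSum_succ {R : Type*} [CommRing R] (α : ℕ → ℕ) (j : ℕ) :
    (digitProdSum α (j + 1) : R) =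
      ((α 1 : R) - chi α 1) * (1 + digitProdSum (fun i => α (i + 1)) j) := by
  rw [digitProdSum, sum_Icc_succ_eq_add_sum_Icc_shift le_add_self, Icc_self, prod_singleton,
    mul_add, mul_one, digitProdSum, mul_sum]
  congr 1
  refine sum_congr rfl fun i _ => ?_
  rw [prod_Icc_succ_eq_mul_prod_Icc_shift le_add_self]
  congr 1
  refine prod_congr rfl fun t ht => ?_
  simp only [chi, Nat.add_sub_cancel, Nat.sub_add_cancel (mem_Icc.1 ht).1]

lemma sum_range_succ_mul_pow_ne_zero {m j : ℕ} {α : ℕ → ℕ} (hj : α j ≠ 0) (hm : m ≠ 0) :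
    ∑ i ∈ range (j + 1), α i * m ^ i ≠ 0 := fun h =>
  mul_ne_zero hj (pow_ne_zero j hm) (sum_eq_zero_iff.1 h j (self_mem_range_succ j))

lemma cmSum_digits_add_one {m j : ℕ} {α : ℕ → ℕ} (h0 : α 0 ≠ 0) (hd : ∀ i, i ≤ j → α i < m) :
    (cmSum m (∑ i ∈ range j, α (i + 1) * m ^ i + 1) : ZMod m) = 1 + digitProdSum α j := by
  induction j generalizing α with
  | zero => simp [cmSum, cm_zero, digitProdSum]
  | succ j ih =>
    rw [sum_range_succ_mul_pow, add_comm (α 1), cmSum_mul_add_succ (hd 1 (by omega)),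
      digitProdSum_succ]
    rcases eq_or_ne (α 1) 0 with h1 | h1
    · simp [h1, chi, h0]
    · have := ih (α := fun i => α (i + 1)) h1 (fun i hi => hd (i + 1) (by omega))
      simp [this, chi, h0]

lemma cmSum_digits {m j : ℕ} {α : ℕ → ℕ} (hj : α j ≠ 0) (hd : ∀ i, i ≤ j → α i < m) :
    (cmSum m (∑ i ∈ range (j + 1), α i * m ^ i) : ZMod m) =
      α 0 + (α 0 - 1) * digitProdSum α j := by
  have hm : 0 < m := Nat.zero_lt_of_lt (hd 0 j.zero_le)
  induction j generalizing α with
  | zero => simp [cmSum_of_le (hd 0 le_rfl).le, digitProdSum]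
  | succ j ih =>
    rw [sum_range_succ_mul_pow]
    set q := ∑ i ∈ range (j + 1), α (i + 1) * m ^ i
    have hq : q ≠ 0 := sum_range_succ_mul_pow_ne_zero (α := fun i => α (i + 1)) hj hm.ne'
    rcases eq_or_ne (α 0) 0 with h0 | h0
    · have hq' := ih (α := fun i => α (i + 1)) hj (fun i hi => hd (i + 1) (by omega))
      rw [h0, zero_add, digitProdSum_succ, eq_sub_of_add_eq (cmSum_mul_add_cmSum hm hq), hq']
      simp [chi, h0]
      ring
    · obtain ⟨a, ha⟩ := Nat.exists_eq_succ_of_ne_zero h0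
      have ha_lt : a < m := by have := hd 0 (by omega); omega
      rw [ha, add_comm, Nat.succ_eq_add_one, ← add_assoc, cmSum_mul_add_succ ha_lt,
        cmSum_digits_add_one (by omega) hd]
      push_cast
      ring

theorem cm_congruence_general (m n j : ℕ) (α : ℕ → ℕ) (hj : 0 < α j) (hd : ∀ i, i ≤ j → α i < m)
    (hn : n = ∑ i ∈ Finset.range (j + 1), α i * m ^ i) :
    (cm m (m * n) : ℤ) ≡ (α 0 : ℤ) + ((α 0 : ℤ) - 1) *
      ∑ i ∈ Finset.Icc 1 j, ∏ t ∈ Finset.Icc 1 i, ((α t : ℤ) - (chi α t : ℤ))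
      [ZMOD (m : ℤ)] := by
  have hm : 0 < m := Nat.zero_lt_of_lt (hd 0 j.zero_le)
  rw [← ZMod.intCast_eq_intCast_iff]
  push_cast
  rw [hn, cm_mul hm (sum_range_succ_mul_pow_ne_zero hj.ne' hm.ne'), cmSum_digits hj.ne' hd]
  rfl

theorem cm_congruence (m n j : ℕ) (α : ℕ → ℕ) (hm : 2 ≤ m) (hj : 0 < α j) (hd : ∀ i, i ≤ j → α i < m)
    (hn : n = ∑ i ∈ Finset.range (j + 1), α i * m ^ i) :
    (cm m (m * n) : ℤ) ≡ (α 0 : ℤ) + ((α 0 : ℤ) - 1) *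
      ∑ i ∈ Finset.Icc 1 j, ∏ t ∈ Finset.Icc 1 i, ((α t : ℤ) - (chi α t : ℤ))
      [ZMOD (m : ℤ)] :=
  cm_congruence_general m n j α hj hd hn
end

section
/- For m ≥ 2, let n be a positive integer. Every m-ary partition without gaps of n can be written uniquely in the form (⌊n/m^r⌋ − β_r, α_{r-1} − β_{r-1} + m·β_r, ..., α_1 − β_1 + m·β_2, α_0 + m·β_1) for some 0 ≤ r ≤ j and integers β_r,...,β_1 such that all displayed entries are strictly positive, where (α_j,...,α_0) is the base m representation of n. In particular c_m(n) equals the number of such tuples (r; β_r,...,β_1). -/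
open Finset

section TailSum

variable {R : Type*} [CommSemiring R]

def tailSum (f : ℕ → R) (x : R) (k t : ℕ) : R :=
  ∑ i ∈ range (k - t), f (i + t) * x ^ i

theorem tailSum_zero (f : ℕ → R) (x : R) (k : ℕ) :
    tailSum f x k 0 = ∑ i ∈ range k, f i * x ^ i := by
  simp [tailSum]

theorem tailSum_of_le {f : ℕ → R} {x : R} {k t : ℕ} (h : k ≤ t) : tailSum f x k t = 0 := by
  simp [tailSum, Nat.sub_eq_zero_of_le h]

theorem tailSum_of_lt {f : ℕ → R} {x : R} {k t : ℕ} (h : t < k) :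
    tailSum f x k t = f t + x * tailSum f x k (t + 1) := by
  obtain ⟨s, hs⟩ : ∃ s, k - t = s + 1 := ⟨k - t - 1, by omega⟩
  have hs' : k - (t + 1) = s := by omega
  simp only [tailSum, hs, hs', sum_range_succ', mul_sum, zero_add, pow_zero, mul_one, pow_succ]
  rw [add_comm]
  congr 1
  refine sum_congr rfl fun i _ => ?_
  rw [add_right_comm, add_assoc]
  ring

end TailSum

theorem sum_digits_div_pow {m k : ℕ} {α : ℕ → ℕ} (hd : ∀ i < k, α i < m) (t : ℕ) :
    (∑ i ∈ range k, α i * m ^ i) / m ^ t = tailSum α m k t := by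
  induction t with
  | zero => simp [tailSum_zero]
  | succ t ih =>
    rw [pow_succ, ← Nat.div_div_eq_div_mul, ih]
    rcases lt_or_ge t k with htk | hkt
    · have hα := hd t htk
      rw [tailSum_of_lt htk, Nat.add_mul_div_left _ _ (by omega), Nat.div_eq_of_lt hα, zero_add]
    · simp [tailSum_of_le hkt, tailSum_of_le (hkt.trans t.le_succ)]

section BorrowTuple

variable {m : ℤ} {a N : ℕ → ℤ} {r : ℕ} {β : ℕ → ℤ}

-- With `a t = α t` and `N t = ⌊n / m ^ t⌋` this is the form of the paper, read for `t ≤ r`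
-- (entries with `t > r` are junk); its entry `α 0 + m * β 1` at `t = 0` is the case `β 0 = 0`.
def borrowTuple (m : ℤ) (a N : ℕ → ℤ) (r : ℕ) (β : ℕ → ℤ) (t : ℕ) : ℤ :=
  if r ≤ t then N r - β r else a t - β t + m * β (t + 1)

theorem borrowTuple_self : borrowTuple m a N r β r = N r - β r := by
  simp [borrowTuple]

theorem borrowTuple_of_lt {t : ℕ} (h : t < r) :
    borrowTuple m a N r β t = a t - β t + m * β (t + 1) := by
  simp [borrowTuple, not_le.mpr h]

theorem forall_le_borrowTuple_iff (P : ℕ → ℤ → Prop) (hβ : β 0 = 0) :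
    (∀ t ≤ r, P t (borrowTuple m a N r β t)) ↔
      P r (N r - β r) ∧ (∀ t, 1 ≤ t → t < r → P t (a t - β t + m * β (t + 1))) ∧
        (0 < r → P 0 (a 0 + m * β 1)) := by
  constructor
  · intro h
    refine ⟨borrowTuple_self (m := m) (a := a) ▸ h r le_rfl, fun t _ ht => ?_, fun hr => ?_⟩
    · simpa [borrowTuple_of_lt ht] using h t ht.le
    · simpa [borrowTuple_of_lt hr, hβ] using h 0 hr.le
  · rintro ⟨hr, hpos, hzero⟩ t ht
    rcases ht.lt_or_eq with ht | rfl
    · rw [borrowTuple_of_lt ht]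
      rcases Nat.eq_zero_or_pos t with rfl | ht0
      · simpa [hβ] using hzero ht
      · exact hpos t ht0 ht
    · rwa [borrowTuple_self]

theorem eq_add_mul_of_forall_lt (hN : ∀ t < r, N t = a t + m * N (t + 1)) :
    N 0 = ∑ t ∈ range r, a t * m ^ t + m ^ r * N r := by
  induction r with
  | zero => simp
  | succ r ih =>
    rw [ih fun t ht => hN t (by omega), hN r r.lt_succ_self, sum_range_succ]
    ring

theorem sum_borrowTuple_mul_pow (hN : ∀ t < r, N t = a t + m * N (t + 1)) (hβ : β 0 = 0) :
    ∑ t ∈ range (r + 1), borrowTuple m a N r β t * m ^ t = N 0 := by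
  have hterm : ∀ t ∈ range r, borrowTuple m a N r β t * m ^ t =
      a t * m ^ t + (β (t + 1) * m ^ (t + 1) - β t * m ^ t) := fun t ht => by
    rw [borrowTuple_of_lt (mem_range.mp ht)]
    ring
  rw [sum_range_succ, sum_congr rfl hterm, sum_add_distrib, sum_range_sub (fun t => β t * m ^ t),
    borrowTuple_self, eq_add_mul_of_forall_lt hN, hβ]
  ring

theorem eq_of_forall_lt_borrowTuple_eq {β' : ℕ → ℤ} (hm : m ≠ 0)
    (hβ : ∀ t, t = 0 ∨ r < t → β t = 0) (hβ' : ∀ t, t = 0 ∨ r < t → β' t = 0)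
    (h : ∀ t < r, borrowTuple m a N r β t = borrowTuple m a N r β' t) : β = β' := by
  funext t
  induction t with
  | zero => rw [hβ 0 (Or.inl rfl), hβ' 0 (Or.inl rfl)]
  | succ t ih =>
    rcases lt_or_ge r (t + 1) with hrt | htr
    · rw [hβ _ (Or.inr hrt), hβ' _ (Or.inr hrt)]
    · have := h t htr
      rw [borrowTuple_of_lt htr, borrowTuple_of_lt htr, ih] at this
      exact mul_left_cancel₀ hm (by linarith)

theorem exists_borrowTuple_eq (hN : ∀ t < r, N t = a t + m * N (t + 1)) {l : ℕ → ℤ}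
    (hl : ∑ t ∈ range (r + 1), l t * m ^ t = N 0) :
    ∃ β : ℕ → ℤ, (∀ t, t = 0 ∨ r < t → β t = 0) ∧ ∀ t ≤ r, l t = borrowTuple m a N r β t := by
  set γ : ℕ → ℤ := fun t => N t - tailSum l m (r + 1) t
  have hγ0 : γ 0 = 0 := by simp [γ, tailSum_zero, hl]
  have hγ : ∀ t < r, l t = a t - γ t + m * γ (t + 1) := fun t ht => by
    simp only [γ, tailSum_of_lt (by omega : t < r + 1), hN t ht]
    ring
  refine ⟨fun t => if t ≤ r then γ t else 0, fun t ht => ?_, fun t ht => ?_⟩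
  · rcases ht with rfl | ht
    · simpa using hγ0
    · simp [not_le.mpr ht]
  · rcases ht.lt_or_eq with ht | rfl
    · simp [borrowTuple_of_lt ht, ht.le, Nat.succ_le_of_lt ht, hγ t ht]
    · simp [borrowTuple_self, γ, tailSum_of_lt (Nat.lt_succ_self t), tailSum_of_le (le_refl _)]

end BorrowTuple

section GaplessPartition

theorem gapless_iff_exists_support_eq_range {f : ℕ →₀ ℕ} :
    (∀ i k, f i ≠ 0 → k ≤ i → f k ≠ 0) ↔ ∃ s, f.support = range s := by
  constructor
  · intro hgap
    rcases f.support.eq_empty_or_nonempty with h | h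
    · exact ⟨0, h⟩
    refine ⟨f.support.max' h + 1, ext fun i => ?_⟩
    rw [mem_range, Nat.lt_succ_iff]
    refine ⟨fun hi => f.support.le_max' i hi, fun hi => ?_⟩
    exact Finsupp.mem_support_iff.2 (hgap _ i (Finsupp.mem_support_iff.1 (f.support.max'_mem h)) hi)
  · rintro ⟨s, hs⟩ i k hi hki
    rw [← Finsupp.mem_support_iff, hs, mem_range] at hi ⊢
    omega

noncomputable def partOfTuple (r : ℕ) (l : ℕ → ℤ) : ℕ →₀ ℕ :=
  Finsupp.indicator (range (r + 1)) fun t _ => (l t).toNat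

variable {r : ℕ} {l : ℕ → ℤ}

theorem partOfTuple_apply (t : ℕ) : partOfTuple r l t = if t ≤ r then (l t).toNat else 0 := by
  simp [partOfTuple, Finsupp.indicator_apply]

theorem partOfTuple_congr {l' : ℕ → ℤ} (h : ∀ t ≤ r, l t = l' t) :
    partOfTuple r l = partOfTuple r l' := by
  ext t
  rw [partOfTuple_apply, partOfTuple_apply]
  split_ifs with ht
  · rw [h t ht]
  · rfl

theorem partOfTuple_natCast {f : ℕ →₀ ℕ} (hf : f.support ⊆ range (r + 1)) :
    partOfTuple r (fun t => f t) = f := by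
  ext t
  rw [partOfTuple_apply]
  split_ifs with ht
  · exact Int.toNat_natCast _
  · exact (Finsupp.notMem_support_iff.1 fun h => ht (Nat.lt_succ_iff.1 (mem_range.1 (hf h)))).symm

theorem support_partOfTuple (hl : ∀ t ≤ r, 0 < l t) :
    (partOfTuple r l).support = range (r + 1) := by
  ext t
  rw [Finsupp.mem_support_iff, partOfTuple_apply, mem_range, Nat.lt_succ_iff]
  split_ifs with ht
  · simpa [ht] using hl t ht
  · simpa using ht

theorem eq_of_partOfTuple_eq {r' : ℕ} {l' : ℕ → ℤ} (hl : ∀ t ≤ r, 0 < l t)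
    (hl' : ∀ t ≤ r', 0 < l' t) (h : partOfTuple r l = partOfTuple r' l') :
    r = r' ∧ ∀ t ≤ r, l t = l' t := by
  have hr : r = r' := by
    have := (support_partOfTuple hl).symm.trans (h ▸ support_partOfTuple hl')
    simpa using congrArg card this
  subst hr
  refine ⟨rfl, fun t ht => ?_⟩
  have := DFunLike.congr_fun h t
  rw [partOfTuple_apply, partOfTuple_apply, if_pos ht, if_pos ht] at this
  rw [← Int.toNat_of_nonneg (hl t ht).le, ← Int.toNat_of_nonneg (hl' t ht).le, this]

theorem sum_partOfTuple_mul_pow (hl : ∀ t ≤ r, 0 < l t) (m : ℕ) :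
    ((∑ i ∈ (partOfTuple r l).support, partOfTuple r l i * m ^ i : ℕ) : ℤ) =
      ∑ t ∈ range (r + 1), l t * m ^ t := by
  rw [support_partOfTuple hl]
  push_cast
  refine sum_congr rfl fun t ht => ?_
  have ht : t ≤ r := Nat.lt_succ_iff.1 (mem_range.1 ht)
  rw [partOfTuple_apply, if_pos ht, Int.toNat_of_nonneg (hl t ht).le]

end GaplessPartition

theorem le_of_sum_mul_pow_eq {m n j r : ℕ} {l : ℕ → ℕ} (hm : 1 < m) (hlr : 0 < l r)
    (hls : ∑ i ∈ range (r + 1), l i * m ^ i = n) (hn : n < m ^ (j + 1)) : r ≤ j := by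
  have hle : m ^ r ≤ n := calc
    m ^ r ≤ l r * m ^ r := Nat.le_mul_of_pos_left _ hlr
    _ ≤ n := hls ▸ single_le_sum (f := fun i => l i * m ^ i) (fun _ _ => Nat.zero_le _)
      (self_mem_range_succ r)
  exact Nat.lt_succ_iff.1 ((Nat.pow_lt_pow_iff_right hm).1 (hle.trans_lt hn))

section Digits

variable {m n j : ℕ} {α : ℕ → ℕ}

theorem div_pow_eq_digit_add (hd : ∀ i, i ≤ j → α i < m)
    (hn : n = ∑ i ∈ range (j + 1), α i * m ^ i) {t : ℕ} (ht : t ≤ j) :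
    n / m ^ t = α t + m * (n / m ^ (t + 1)) := by
  have hd' : ∀ i < j + 1, α i < m := fun i hi => hd i (Nat.lt_succ_iff.1 hi)
  rw [hn, sum_digits_div_pow hd', sum_digits_div_pow hd', tailSum_of_lt (Nat.lt_succ_of_le ht)]

theorem lt_pow_succ_of_digits (hd : ∀ i, i ≤ j → α i < m)
    (hn : n = ∑ i ∈ range (j + 1), α i * m ^ i) : n < m ^ (j + 1) := by
  have hd' : ∀ i < j + 1, α i < m := fun i hi => hd i (Nat.lt_succ_iff.1 hi)
  have h := sum_digits_div_pow hd' (j + 1)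
  rw [tailSum_of_le le_rfl, Nat.div_eq_zero_iff, ← hn] at h
  exact h.resolve_left (pow_ne_zero _ (by have := hd j le_rfl; omega))

theorem existsUnique_borrowTuple_eq (hm : 2 ≤ m) (hd : ∀ i, i ≤ j → α i < m)
    (hn : n = ∑ i ∈ range (j + 1), α i * m ^ i) {l : ℕ → ℕ} {r : ℕ} (hlr : 0 < l r)
    (hls : ∑ i ∈ range (r + 1), l i * m ^ i = n) :
    r ≤ j ∧ ∃! β : ℕ → ℤ, (∀ t, t = 0 ∨ r < t → β t = 0) ∧
      ∀ t ≤ r, (l t : ℤ) = borrowTuple m (fun t => α t) (fun t => (n / m ^ t : ℕ)) r β t := by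
  have hrj := le_of_sum_mul_pow_eq hm hlr hls (lt_pow_succ_of_digits hd hn)
  have hN : ∀ t < r, ((n / m ^ t : ℕ) : ℤ) = α t + m * (n / m ^ (t + 1) : ℕ) := fun t ht => by
    exact_mod_cast div_pow_eq_digit_add hd hn (by omega)
  obtain ⟨β, hβ, hβl⟩ := exists_borrowTuple_eq hN (l := fun t => l t) (by simp [← hls])
  refine ⟨hrj, β, ⟨hβ, hβl⟩, fun β' ⟨hβ', hβ'l⟩ => ?_⟩
  exact eq_of_forall_lt_borrowTuple_eq (by omega) hβ' hβ
    fun t ht => (hβ'l t ht.le).symm.trans (hβl t ht.le)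

theorem card_gapless_eq (hm : 2 ≤ m) (hd : ∀ i, i ≤ j → α i < m) (hj : 0 < α j)
    (hn : n = ∑ i ∈ range (j + 1), α i * m ^ i) :
    Nat.card {f : ℕ →₀ ℕ // (∑ i ∈ f.support, f i * m ^ i = n) ∧
      ∀ i k, f i ≠ 0 → k ≤ i → f k ≠ 0} =
    Nat.card {p : ℕ × (ℕ → ℤ) // p.1 ≤ j ∧ (∀ t, t = 0 ∨ p.1 < t → p.2 t = 0) ∧
      ∀ t ≤ p.1, 0 < borrowTuple m (fun t => α t) (fun t => (n / m ^ t : ℕ)) p.1 p.2 t} := by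
  set T := fun (p : ℕ × (ℕ → ℤ)) => borrowTuple m (fun t => α t) (fun t => (n / m ^ t : ℕ)) p.1 p.2
  have hn0 : n ≠ 0 := by
    rintro rfl
    have := div_pow_eq_digit_add hd hn le_rfl
    rw [Nat.zero_div, Nat.zero_div] at this
    omega
  have hN : ∀ r ≤ j, ∀ t < r, ((n / m ^ t : ℕ) : ℤ) = α t + m * (n / m ^ (t + 1) : ℕ) :=
    fun r hr t ht => by exact_mod_cast div_pow_eq_digit_add hd hn (by omega)
  symm
  refine Nat.card_eq_of_bijective (fun p => ⟨partOfTuple p.1.1 (T p.1), ?_, ?_⟩) ⟨?_, ?_⟩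
  · obtain ⟨⟨r, β⟩, hrj, hβ, hpos⟩ := p
    have := sum_borrowTuple_mul_pow (hN r hrj) (hβ 0 (Or.inl rfl))
    rw [← sum_partOfTuple_mul_pow hpos] at this
    exact_mod_cast this.trans (by simp : ((n / m ^ 0 : ℕ) : ℤ) = n)
  · exact gapless_iff_exists_support_eq_range.2 ⟨_, support_partOfTuple p.2.2.2⟩
  · rintro ⟨⟨r, β⟩, hrj, hβ, hpos⟩ ⟨⟨r', β'⟩, hrj', hβ', hpos'⟩ h
    obtain ⟨rfl, hT⟩ := eq_of_partOfTuple_eq hpos hpos' (congrArg Subtype.val h)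
    have := eq_of_forall_lt_borrowTuple_eq (by omega) hβ hβ' fun t ht => hT t ht.le
    subst this
    rfl
  · rintro ⟨f, hsum, hgap⟩
    obtain ⟨s, hs⟩ := gapless_iff_exists_support_eq_range.1 hgap
    obtain ⟨r, rfl⟩ : ∃ r, s = r + 1 := Nat.exists_eq_succ_of_ne_zero fun h0 => by
      rw [hs, h0, range_zero, sum_empty] at hsum
      exact hn0 hsum.symm
    have hpos : ∀ t ≤ r, 0 < f t := fun t ht =>
      Nat.pos_of_ne_zero (Finsupp.mem_support_iff.1 (hs ▸ mem_range.2 (Nat.lt_succ_of_le ht)))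
    obtain ⟨hrj, β, ⟨hβ, hβf⟩, -⟩ :=
      existsUnique_borrowTuple_eq hm hd hn (hpos r le_rfl) (hs ▸ hsum)
    refine ⟨⟨(r, β), hrj, hβ, fun t ht => hβf t ht ▸ Int.natCast_pos.2 (hpos t ht)⟩, ?_⟩
    exact Subtype.ext ((partOfTuple_congr fun t ht => (hβf t ht).symm).trans
      (partOfTuple_natCast hs.subset))

end Digits

theorem gapless_unique_form_general (m n j : ℕ) (α : ℕ → ℕ) (hm : 2 ≤ m) (hj : 0 < α j) (hd : ∀ i, i ≤ j → α i < m)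
    (hn : n = ∑ i ∈ Finset.range (j + 1), α i * m ^ i)
    (l : ℕ → ℕ) (r : ℕ)
    (hlp : ∀ i, i ≤ r → 0 < l i)
    (hls : ∑ i ∈ Finset.range (r + 1), l i * m ^ i = n) :
    (r ≤ j ∧ ∃! β : ℕ → ℤ,
      (∀ t, t = 0 ∨ r < t → β t = 0) ∧
      (l r : ℤ) = ((n / m ^ r : ℕ) : ℤ) - β r ∧
      (∀ t, 1 ≤ t → t < r → (l t : ℤ) = (α t : ℤ) - β t + (m : ℤ) * β (t + 1)) ∧
      (0 < r → (l 0 : ℤ) = (α 0 : ℤ) + (m : ℤ) * β 1)) ∧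
    cm m n = Nat.card {p : ℕ × (ℕ → ℤ) //
      p.1 ≤ j ∧ (∀ t, t = 0 ∨ p.1 < t → p.2 t = 0) ∧
      0 < ((n / m ^ p.1 : ℕ) : ℤ) - p.2 p.1 ∧
      (∀ t, 1 ≤ t → t < p.1 → 0 < (α t : ℤ) - p.2 t + (m : ℤ) * p.2 (t + 1)) ∧
      (0 < p.1 → 0 < (α 0 : ℤ) + (m : ℤ) * p.2 1)} := by
  obtain ⟨hrj, hβ⟩ := existsUnique_borrowTuple_eq hm hd hn (hlp r le_rfl) hls
  refine ⟨⟨hrj, (existsUnique_congr fun β => and_congr_right fun hβ0 => ?_).1 hβ⟩, ?_⟩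
  · exact forall_le_borrowTuple_iff (fun t x => (l t : ℤ) = x) (hβ0 0 (Or.inl rfl))
  · rw [cm, card_gapless_eq hm hd hj hn]
    exact Nat.card_congr (Equiv.subtypeEquivRight fun p => and_congr_right fun _ =>
      and_congr_right fun hβ0 => forall_le_borrowTuple_iff (fun _ x => 0 < x) (hβ0 0 (Or.inl rfl)))

theorem gapless_unique_form (m n j : ℕ) (α : ℕ → ℕ) (hm : 2 ≤ m) (hj : 0 < α j) (hd : ∀ i, i ≤ j → α i < m)
    (hn : n = ∑ i ∈ Finset.range (j + 1), α i * m ^ i)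
    (l : ℕ → ℕ) (r : ℕ)
    (hlp : ∀ i, i ≤ r → 0 < l i) (hl0 : ∀ i, r < i → l i = 0)
    (hls : ∑ i ∈ Finset.range (r + 1), l i * m ^ i = n) :
    (r ≤ j ∧ ∃! β : ℕ → ℤ,
      (∀ t, t = 0 ∨ r < t → β t = 0) ∧
      (l r : ℤ) = ((n / m ^ r : ℕ) : ℤ) - β r ∧
      (∀ t, 1 ≤ t → t < r → (l t : ℤ) = (α t : ℤ) - β t + (m : ℤ) * β (t + 1)) ∧
      (0 < r → (l 0 : ℤ) = (α 0 : ℤ) + (m : ℤ) * β 1)) ∧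
    cm m n = Nat.card {p : ℕ × (ℕ → ℤ) //
      p.1 ≤ j ∧ (∀ t, t = 0 ∨ p.1 < t → p.2 t = 0) ∧
      0 < ((n / m ^ p.1 : ℕ) : ℤ) - p.2 p.1 ∧
      (∀ t, 1 ≤ t → t < p.1 → 0 < (α t : ℤ) - p.2 t + (m : ℤ) * p.2 (t + 1)) ∧
      (0 < p.1 → 0 < (α 0 : ℤ) + (m : ℤ) * p.2 1)} :=
  gapless_unique_form_general m n j α hm hj hd hn l r hlp hls
end
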